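/- If h is an entire function on ℂ, not identically zero, then there is no C² function u : ℂ → ℝ satisfying Δu = 4|h(z)|²e^{2u} on all of ℂ. -/

import Mathlib

/-!
Where `h ≠ 0`, the function `λ = ‖h‖ e^u` is the density of a conformal metric of curvature `-4`:
`log ‖h‖` is harmonic, so `Δ log λ = Δ u = 4 λ²`. The Ahlfors–Schwarz lemma compares `λ` with
the density `R / (R² - ‖z‖²)` of the metric of the same curvature on the disc of radius `R`:
at an interior maximum `p` of `λ (R² - ‖z‖²)` the maximum principle applied to
`log λ + log (R² - ‖z‖²)` gives `4 λ(p)² ≤ 4 R² / (R² - ‖p‖²)²`, hence `λ (R² - ‖z‖²) ≤ R`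
on the whole disc. Letting `R → ∞` forces `λ ≡ 0`, contradicting `h ≢ 0`.
-/

open Complex

/-- Euclidean Laplacian of a real-valued function on `ℂ`. -/
noncomputable def lap (u : ℂ → ℝ) (z : ℂ) : ℝ :=
  fderiv ℝ (fun w => fderiv ℝ u w 1) z 1 + fderiv ℝ (fun w => fderiv ℝ u w Complex.I) z Complex.I

open Filter Topology Laplacian InnerProductSpace

theorem IsLocalMax.deriv_deriv_nonpos {f : ℝ → ℝ} {a : ℝ} (h : IsLocalMax f a)
    (hc : ContinuousAt f a) : deriv (deriv f) a ≤ 0 := by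
  by_contra! hpos
  have hconst : f =ᶠ[𝓝 a] fun _ => f a :=
    (h.and (isLocalMin_of_deriv_deriv_pos hpos h.deriv_eq_zero hc)).mono
      fun x hx => le_antisymm hx.1 hx.2
  rw [hconst.deriv.deriv_eq, deriv_const', deriv_const] at hpos
  exact hpos.false

section SecondDerivative

variable {E F : Type*} [NormedAddCommGroup E] [NormedSpace ℝ E]
  [NormedAddCommGroup F] [NormedSpace ℝ F] {f : E → F} {x : E}

theorem fderiv_fderiv_apply_eq_iteratedFDeriv (hf : DifferentiableAt ℝ (fderiv ℝ f) x)
    (v w : E) : fderiv ℝ (fun y => fderiv ℝ f y v) x w = iteratedFDeriv ℝ 2 f x ![w, v] := by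
  rw [fderiv_clm_apply hf (differentiableAt_const v), iteratedFDeriv_two_apply]
  simp

theorem iteratedFDeriv_two_self_eq_deriv_deriv_comp_line (hf : ContDiffAt ℝ 2 f x) (d : E) :
    iteratedFDeriv ℝ 2 f x ![d, d] = deriv (deriv fun t : ℝ => f (x + t • d)) 0 := by
  have hline : ∀ t : ℝ, HasDerivAt (fun s : ℝ => x + s • d) d t := fun t => by
    simpa using ((hasDerivAt_id t).smul_const d).const_add x
  have hline_tendsto : Tendsto (fun s : ℝ => x + s • d) (𝓝 0) (𝓝 x) := by
    simpa using (hline 0).continuousAt.tendsto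
  have hdf : DifferentiableAt ℝ (fderiv ℝ f) x :=
    (hf.fderiv_right (m := 1) le_rfl).differentiableAt one_ne_zero
  have hderiv : deriv (fun t : ℝ => f (x + t • d)) =ᶠ[𝓝 0]
      fun t => fderiv ℝ f (x + t • d) d := by
    filter_upwards [hline_tendsto.eventually (hf.eventually (by simp))] with t ht
    exact ((ht.differentiableAt two_ne_zero).hasFDerivAt.comp_hasDerivAt t (hline t)).deriv
  have hcomp := (hdf.hasFDerivAt.clm_apply (hasFDerivAt_const d x)).comp_hasDerivAt_of_eq 0
    (hline 0) (by simp)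
  rw [hderiv.deriv_eq, iteratedFDeriv_two_apply]
  simpa [Function.comp_def] using hcomp.deriv.symm

end SecondDerivative

theorem IsLocalMax.laplacian_nonpos {E : Type*} [NormedAddCommGroup E] [InnerProductSpace ℝ E]
    [FiniteDimensional ℝ E] {f : E → ℝ} {x : E} (h : IsLocalMax f x)
    (hf : ContDiffAt ℝ 2 f x) : Δ f x ≤ 0 := by
  rw [laplacian_eq_iteratedFDeriv_stdOrthonormalBasis]
  refine Finset.sum_nonpos fun i _ => ?_
  set d := stdOrthonormalBasis ℝ E i
  have hline : ContinuousAt (fun t : ℝ => x + t • d) 0 := by fun_prop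
  have hx : x + (0 : ℝ) • d = x := by simp
  have hmax : IsLocalMax (fun t : ℝ => f (x + t • d)) 0 :=
    IsLocalMax.comp_continuous (g := fun t : ℝ => x + t • d) (by rwa [hx]) hline
  rw [iteratedFDeriv_two_self_eq_deriv_deriv_comp_line hf]
  exact hmax.deriv_deriv_nonpos (hf.continuousAt.comp_of_eq hline hx)

theorem lap_eq_laplacian {u : ℂ → ℝ} {z : ℂ} (hu : ContDiffAt ℝ 2 u z) : lap u z = Δ u z := by
  have hdu : DifferentiableAt ℝ (fderiv ℝ u) z :=
    (hu.fderiv_right (m := 1) le_rfl).differentiableAt one_ne_zero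
  rw [lap, laplacian_eq_iteratedFDeriv_complexPlane, fderiv_fderiv_apply_eq_iteratedFDeriv hdu,
    fderiv_fderiv_apply_eq_iteratedFDeriv hdu]

theorem deriv_deriv_log_quadratic {a : ℝ} (ha : 0 < a) (b c : ℝ) :
    deriv (deriv fun t => Real.log (a + b * t + c * t ^ 2)) 0 = (2 * c * a - b ^ 2) / a ^ 2 := by
  have hq : ∀ t, HasDerivAt (fun t => a + b * t + c * t ^ 2) (b + 2 * c * t) t := fun t => by
    refine ((((hasDerivAt_id' t).const_mul b).const_add a).fun_add
      ((hasDerivAt_pow 2 t).const_mul c)).congr_deriv ?_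
    push_cast
    ring
  have hpos : ∀ᶠ t in 𝓝 (0 : ℝ), 0 < a + b * t + c * t ^ 2 :=
    continuousAt_const.eventually_lt (hq 0).continuousAt (by simpa using ha)
  have hderiv : deriv (fun t => Real.log (a + b * t + c * t ^ 2)) =ᶠ[𝓝 0]
      fun t => (b + 2 * c * t) / (a + b * t + c * t ^ 2) := by
    filter_upwards [hpos] with t ht
    exact ((hq t).log ht.ne').deriv
  have hquot := ((hasDerivAt_id' (0 : ℝ)).const_mul (2 * c) |>.const_add b).fun_div (hq 0)
    (by simpa using ha.ne')
  rw [hderiv.deriv_eq, hquot.deriv]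
  ring

section Barrier

variable {R : ℝ} {z : ℂ}

theorem contDiffAt_log_sub_norm_sq (hz : ‖z‖ < R) :
    ContDiffAt ℝ 2 (fun w : ℂ => Real.log (R ^ 2 - ‖w‖ ^ 2)) z :=
  (contDiffAt_const.sub (contDiff_norm_sq ℝ).contDiffAt).log
    (sub_pos.2 (pow_lt_pow_left₀ hz (norm_nonneg z) two_ne_zero)).ne'

theorem laplacian_log_sub_norm_sq (hz : ‖z‖ < R) :
    Δ (fun w : ℂ => Real.log (R ^ 2 - ‖w‖ ^ 2)) z = -(4 * R ^ 2 / (R ^ 2 - ‖z‖ ^ 2) ^ 2) := by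
  have ha : 0 < R ^ 2 - ‖z‖ ^ 2 := sub_pos.2 (pow_lt_pow_left₀ hz (norm_nonneg z) two_ne_zero)
  have hline : ∀ d : ℂ, (fun t : ℝ => Real.log (R ^ 2 - ‖z + t • d‖ ^ 2)) =
      fun t => Real.log ((R ^ 2 - ‖z‖ ^ 2) + (-2 * inner ℝ z d) * t + (-‖d‖ ^ 2) * t ^ 2) := by
    intro d
    funext t
    rw [norm_add_sq_real, norm_smul, inner_smul_right, Real.norm_eq_abs, mul_pow, sq_abs]
    ring_nf
  have hnorm : ‖z‖ ^ 2 = z.re ^ 2 + z.im ^ 2 := by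
    rw [Complex.sq_norm, Complex.normSq_apply]
    ring
  rw [laplacian_eq_iteratedFDeriv_complexPlane]
  simp only [iteratedFDeriv_two_self_eq_deriv_deriv_comp_line (contDiffAt_log_sub_norm_sq hz),
    hline, deriv_deriv_log_quadratic ha, Complex.inner, norm_one, Complex.norm_I, one_mul,
    Complex.I_mul_re, Complex.conj_re, Complex.conj_im, neg_neg]
  field_simp
  rw [hnorm]
  ring

end Barrier

/-- `R` times the ratio of the density `‖h‖ e^u` to the density `R / (R² - ‖z‖²)` of the metric
of curvature `-4` on the disc of radius `R`. -/
noncomputable def densityRatio (h : ℂ → ℂ) (u : ℂ → ℝ) (R : ℝ) (z : ℂ) : ℝ :=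
  ‖h z‖ * Real.exp (u z) * (R ^ 2 - ‖z‖ ^ 2)

section DensityRatio

variable {h : ℂ → ℂ} {u : ℂ → ℝ} {R : ℝ} {p : ℂ}

theorem continuousAt_densityRatio (hh : ContinuousAt h p) (hu : ContinuousAt u p) :
    ContinuousAt (densityRatio h u R) p :=
  (hh.norm.mul (Real.continuous_exp.continuousAt.comp hu)).mul
    (continuousAt_const.sub (continuous_norm.continuousAt.pow 2))

theorem log_densityRatio (hp : densityRatio h u R p ≠ 0) :
    Real.log (densityRatio h u R p) = u p + Real.log ‖h p‖ + Real.log (R ^ 2 - ‖p‖ ^ 2) := by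
  simp only [densityRatio, ne_eq, mul_eq_zero, not_or] at hp ⊢
  rw [Real.log_mul (mul_ne_zero hp.1.1 hp.1.2) hp.2, Real.log_mul hp.1.1 hp.1.2, Real.log_exp]
  ring

theorem laplacian_add_log_norm_add_log_sub_norm_sq (hh : AnalyticAt ℂ h p) (hhp : h p ≠ 0)
    (hu : ContDiffAt ℝ 2 u p) (hp : ‖p‖ < R) :
    Δ (fun z => u z + Real.log ‖h z‖ + Real.log (R ^ 2 - ‖z‖ ^ 2)) p =
      Δ u p - 4 * R ^ 2 / (R ^ 2 - ‖p‖ ^ 2) ^ 2 := by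
  have hlog := hh.harmonicAt_log_norm hhp
  have hsum : ContDiffAt ℝ 2 (u + fun z => Real.log ‖h z‖) p := hu.add hlog.1
  have hsplit : (fun z => u z + Real.log ‖h z‖ + Real.log (R ^ 2 - ‖z‖ ^ 2)) =
      (u + fun z => Real.log ‖h z‖) + fun z => Real.log (R ^ 2 - ‖z‖ ^ 2) := rfl
  rw [hsplit, hsum.laplacian_add (contDiffAt_log_sub_norm_sq hp), hu.laplacian_add hlog.1,
    hlog.2.self_of_nhds, laplacian_log_sub_norm_sq hp, Pi.zero_apply]
  ring

theorem densityRatio_le_of_isLocalMax (hh : AnalyticAt ℂ h p) (hhp : h p ≠ 0)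
    (hu : ContDiffAt ℝ 2 u p) (hlap : Δ u p = 4 * ‖h p‖ ^ 2 * Real.exp (2 * u p))
    (hp : ‖p‖ < R) (hmax : IsLocalMax (densityRatio h u R) p) :
    densityRatio h u R p ≤ R := by
  have ha : 0 < R ^ 2 - ‖p‖ ^ 2 := sub_pos.2 (pow_lt_pow_left₀ hp (norm_nonneg p) two_ne_zero)
  have hpos : 0 < densityRatio h u R p := by unfold densityRatio; positivity
  have hvmax : IsLocalMax (fun z => u z + Real.log ‖h z‖ + Real.log (R ^ 2 - ‖z‖ ^ 2)) p := by
    filter_upwards [hmax, continuousAt_const.eventually_lt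
      (continuousAt_densityRatio hh.continuousAt hu.continuousAt) hpos] with z hz hzpos
    rw [← log_densityRatio hzpos.ne', ← log_densityRatio hpos.ne']
    exact Real.log_le_log hzpos hz
  have hlap_nonpos := hvmax.laplacian_nonpos
    ((hu.add (hh.harmonicAt_log_norm hhp).1).add (contDiffAt_log_sub_norm_sq hp))
  rw [laplacian_add_log_norm_add_log_sub_norm_sq hh hhp hu hp, hlap, sub_nonpos,
    le_div_iff₀ (by positivity),
    show Real.exp (2 * u p) = Real.exp (u p) ^ 2 by rw [← Real.exp_nat_mul]; norm_num]
    at hlap_nonpos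
  have hsq : densityRatio h u R p ^ 2 ≤ R ^ 2 := by unfold densityRatio; linarith
  exact (pow_le_pow_iff_left₀ hpos.le ((norm_nonneg p).trans hp.le) two_ne_zero).1 hsq

theorem densityRatio_le (hh : Differentiable ℂ h) (hu : ContDiff ℝ 2 u)
    (hlap : ∀ z, Δ u z = 4 * ‖h z‖ ^ 2 * Real.exp (2 * u z)) {z : ℂ} (hz : ‖z‖ ≤ R) :
    densityRatio h u R z ≤ R := by
  have hcont : Continuous (densityRatio h u R) := continuous_iff_continuousAt.2 fun _ =>
    continuousAt_densityRatio hh.continuous.continuousAt hu.continuous.continuousAt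
  obtain ⟨p, -, hpmax⟩ := (isCompact_closedBall (0 : ℂ) R).exists_isMaxOn
    ⟨z, mem_closedBall_zero_iff.2 hz⟩ hcont.continuousOn
  refine (hpmax (mem_closedBall_zero_iff.2 hz)).trans (not_lt.1 fun hRp => ?_)
  have hR : 0 ≤ R := (norm_nonneg z).trans hz
  have hpos : 0 < densityRatio h u R p := hR.trans_lt hRp
  have hp : ‖p‖ < R := by
    refine lt_of_pow_lt_pow_left₀ 2 hR (sub_pos.1 (pos_of_mul_pos_right hpos ?_))
    positivity
  have hhp : h p ≠ 0 := fun h0 => by simp [densityRatio, h0] at hpos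
  have hloc : IsLocalMax (densityRatio h u R) p := hpmax.isLocalMax <|
    mem_of_superset (Metric.isOpen_ball.mem_nhds (mem_ball_zero_iff.2 hp))
      Metric.ball_subset_closedBall
  exact hRp.not_ge (densityRatio_le_of_isLocalMax (hh.analyticAt p) hhp hu.contDiffAt
    (hlap p) hp hloc)

end DensityRatio

/-- If `h` is entire and not identically zero, then `Δu = 4|h|²e^{2u}` has no C²
solution `u : ℂ → ℝ` on the whole plane. -/
theorem no_entire_solution
    (h : ℂ → ℂ) (hh : Differentiable ℂ h) (hne : ∃ z : ℂ, h z ≠ 0) :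
    ¬ ∃ u : ℂ → ℝ, ContDiff ℝ 2 u ∧
      ∀ z : ℂ, lap u z = 4 * ‖h z‖^2 * Real.exp (2 * u z) := by
  rintro ⟨u, hu, hlap⟩
  obtain ⟨z₀, hz₀⟩ := hne
  set c := ‖h z₀‖ * Real.exp (u z₀)
  have hc : 0 < c := by positivity
  set R := ‖z₀‖ + c⁻¹ + 1 with hR
  have hzR : ‖z₀‖ ≤ R := by linarith [inv_pos.2 hc]
  have hbound : c * (R ^ 2 - ‖z₀‖ ^ 2) ≤ R :=
    densityRatio_le hh hu (fun z => (lap_eq_laplacian hu.contDiffAt).symm.trans (hlap z)) hzR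
  have hcR : c * (R - ‖z₀‖) = 1 + c := by
    rw [hR, add_assoc, add_sub_cancel_left, mul_add, mul_inv_cancel₀ hc.ne', mul_one]
  refine lt_irrefl R (calc
    R < (1 + c) * (R + ‖z₀‖) := by nlinarith [norm_nonneg z₀]
    _ = c * (R ^ 2 - ‖z₀‖ ^ 2) := by rw [← hcR]; ring
    _ ≤ R := hbound)
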